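/- arXiv:2311.12434 — 2 statements merged into one kernel-verified Lean document; each statement's English description precedes it below -/
import Mathlib

section
/- Let 1 ≤ p < ∞. Then for every f ∈ L^p(G,μ) and every n ∈ ℕ, one has ∫_G ‖f(·+t) − f(·)‖_p K_{2^n}(t) dμ(t) ≤ Σ_{s=0}^{n} (2^s/2^n) ω_p(1/2^s, f), where for each t ∈ G the quantity ‖f(·+t) − f(·)‖_p is the L^p norm of x ↦ f(x+t) − f(x). -/
open MeasureTheory Finset Filter Topology
open scoped ENNReal

/-- The Walsh group `G = ∏_{k ∈ ℕ} Z₂`. -/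
abbrev WalshG : Type := ℕ → ZMod 2

/-- The normalized Haar measure on `G`, i.e. the product of the uniform
probability measures on the coordinates. -/
noncomputable def μG : Measure WalshG := Measure.addHaarMeasure ⊤

/-- The Walsh functions `w_n(x) = ∏_k r_k(x)^{n_k}` where `r_k(x) = (-1)^{x_k}`
and `n = ∑_k n_k 2^k` is the binary expansion of `n`. -/
noncomputable def walsh (n : ℕ) (x : WalshG) : ℝ :=
  ∏ k ∈ Finset.range n, if n.testBit k then (-1 : ℝ) ^ ((x k).val) else 1

/-- Walsh–Fourier coefficient `f̂(k) = ∫_G f w_k dμ`. -/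
noncomputable def walshFourier (f : WalshG → ℝ) (k : ℕ) : ℝ :=
  ∫ x, f x * walsh k x ∂μG

/-- Partial sums `S_n f = ∑_{k=0}^{n-1} f̂(k) w_k` of the Walsh–Fourier series. -/
noncomputable def walshSum (f : WalshG → ℝ) (n : ℕ) (x : WalshG) : ℝ :=
  ∑ k ∈ Finset.range n, walshFourier f k * walsh k x

/-- Fejér means `σ_n f = (1/n) ∑_{k=1}^n S_k f`. -/
noncomputable def fejerMean (f : WalshG → ℝ) (n : ℕ) (x : WalshG) : ℝ :=
  (1 / (n : ℝ)) * ∑ k ∈ Finset.Icc 1 n, walshSum f k x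

/-- `Q_n = ∑_{k=0}^{n-1} q_k`. -/
noncomputable def Qnor (q : ℕ → ℝ) (n : ℕ) : ℝ := ∑ k ∈ Finset.range n, q k

/-- Nörlund means `t_n f = (1/Q_n) ∑_{k=1}^n q_{n-k} S_k f`. -/
noncomputable def norlundMean (q : ℕ → ℝ) (f : WalshG → ℝ) (n : ℕ) (x : WalshG) : ℝ :=
  (1 / Qnor q n) * ∑ k ∈ Finset.Icc 1 n, q (n - k) * walshSum f k x

/-- Dirichlet kernels `D_n = ∑_{k=0}^{n-1} w_k`. -/
noncomputable def dirichletKernel (n : ℕ) (x : WalshG) : ℝ :=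
  ∑ k ∈ Finset.range n, walsh k x

/-- Fejér kernels `K_n = (1/n) ∑_{k=1}^n D_k`. -/
noncomputable def fejerKernel (n : ℕ) (x : WalshG) : ℝ :=
  (1 / (n : ℝ)) * ∑ k ∈ Finset.Icc 1 n, dirichletKernel k x

/-- `I_N = {y ∈ G : y₀ = ⋯ = y_{N-1} = 0}`. -/
def IN (N : ℕ) : Set WalshG := {y | ∀ k < N, y k = 0}

/-- The `L^p(G, μ)` norm (with real exponent `p`). -/
noncomputable def lpNorm (p : ℝ) (f : WalshG → ℝ) : ℝ :=
  (eLpNorm f (ENNReal.ofReal p) μG).toReal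

/-- `‖f(·+t) - f(·)‖_p` for a fixed `t ∈ G`. -/
noncomputable def lpTransDiff (p : ℝ) (f : WalshG → ℝ) (t : WalshG) : ℝ :=
  lpNorm p (fun x => f (x + t) - f x)

/-- Modulus of continuity `ω_p(1/2^N, f) = sup_{t ∈ I_N} ‖f(·+t) - f(·)‖_p`. -/
noncomputable def modulus (p : ℝ) (f : WalshG → ℝ) (N : ℕ) : ℝ :=
  ⨆ t ∈ IN N, lpTransDiff p f t

/-- Convolution `(g ∗ f)(x) = ∫_G f(t) g(x+t) dμ(t)` (note `x - t = x + t` in `G`). -/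
noncomputable def walshConv (g f : WalshG → ℝ) (x : WalshG) : ℝ :=
  ∫ t, f t * g (x + t) ∂μG



-- === from t2.lean ===

lemma walsh_eq_prod_range {n : ℕ} (M : ℕ) (h : n < 2 ^ M) (x : WalshG) :
    walsh n x = ∏ k ∈ Finset.range M, if n.testBit k then (-1 : ℝ) ^ ((x k).val) else 1 := by
  unfold walsh
  rcases le_total n M with hnM | hMn
  · exact (Finset.prod_subset (Finset.range_subset_range.2 hnM) (by
      intro k _ hk
      simp only [Finset.mem_range, not_lt] at hk
      rw [Nat.testBit_lt_two_pow (lt_of_lt_of_le (Nat.lt_two_pow_self) (Nat.pow_le_pow_right (by norm_num) hk))]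
      simp))
  · exact (Finset.prod_subset (Finset.range_subset_range.2 hMn) (by
      intro k _ hk
      simp only [Finset.mem_range, not_lt] at hk
      rw [Nat.testBit_lt_two_pow (lt_of_lt_of_le h (Nat.pow_le_pow_right (by norm_num) hk))]
      simp)).symm

lemma abs_walsh (n : ℕ) (x : WalshG) : |walsh n x| = 1 := by
  unfold walsh
  rw [Finset.abs_prod]
  apply Finset.prod_eq_one
  intro k _
  split
  · rw [abs_pow, abs_neg, abs_one, one_pow]
  · exact abs_one

lemma walsh_values (n : ℕ) (x : WalshG) : walsh n x = 1 ∨ walsh n x = -1 :=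
  abs_eq (by norm_num : (0:ℝ) ≤ 1) |>.1 (abs_walsh n x)

lemma testBit_two_pow_add {n j : ℕ} (hj : j < 2 ^ n) (k : ℕ) :
    (2 ^ n + j).testBit k = if k < n then j.testBit k else decide (k = n) := by
  have := Nat.testBit_two_pow_mul_add 1 hj k
  rw [mul_one] at this
  rw [this]
  rcases lt_or_ge k n with h | h
  · simp [h]
  · rw [if_neg (by omega), if_neg (by omega)]
    rcases eq_or_ne k n with h' | h'
    · subst h'; simp
    · have h2 : 0 < k - n := by omega
      have : (1:ℕ) < 2 ^ (k - n) := by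
        calc (1:ℕ) < 2 ^ 1 := by norm_num
        _ ≤ 2 ^ (k-n) := Nat.pow_le_pow_right (by norm_num) h2
      rw [Nat.testBit_lt_two_pow this]
      simp [h']

lemma walsh_two_pow_add {n j : ℕ} (hj : j < 2 ^ n) (x : WalshG) :
    walsh (2 ^ n + j) x = walsh (2 ^ n) x * walsh j x := by
  have hpow : (2:ℕ) ^ n < 2 ^ (n+1) := by
    have := Nat.one_le_two_pow (n := n); rw [pow_succ]; omega
  have h1 : 2 ^ n + j < 2 ^ (n + 1) := by rw [pow_succ]; omega
  have h3 : j < 2 ^ (n+1) := lt_trans hj hpow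
  rw [walsh_eq_prod_range (n+1) h1, walsh_eq_prod_range (n+1) hpow, walsh_eq_prod_range (n+1) h3,
    ← Finset.prod_mul_distrib]
  apply Finset.prod_congr rfl
  intro k hk
  rw [testBit_two_pow_add hj k]
  rcases lt_trichotomy k n with h | h | h
  · rw [if_pos h, Nat.testBit_two_pow_of_ne (by omega)]
    simp
  · subst h
    rw [if_neg (lt_irrefl k), Nat.testBit_two_pow_self, Nat.testBit_lt_two_pow hj]
    simp
  · have hkn : k ≠ n := by omega
    rw [if_neg (by omega : ¬ k < n), Nat.testBit_two_pow_of_ne (by omega : n ≠ k),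
      Nat.testBit_lt_two_pow (lt_of_lt_of_le hj (Nat.pow_le_pow_right (by norm_num) (by omega : n ≤ k)))]
    simp [hkn]

-- === from t3.lean ===


lemma walsh_zero (x : WalshG) : walsh 0 x = 1 := by simp [walsh]

lemma dirichlet_two_pow_add {n k : ℕ} (hk : k ≤ 2 ^ n) (x : WalshG) :
    dirichletKernel (2 ^ n + k) x
      = dirichletKernel (2 ^ n) x + walsh (2 ^ n) x * dirichletKernel k x := by
  unfold dirichletKernel
  rw [Finset.sum_range_add, Finset.mul_sum]
  congr 1
  apply Finset.sum_congr rfl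
  intro i hi
  simp only [Finset.mem_range] at hi
  exact walsh_two_pow_add (by omega) x

lemma dirichlet_two_pow_nonneg (n : ℕ) (x : WalshG) : 0 ≤ dirichletKernel (2 ^ n) x := by
  induction n with
  | zero => simp [dirichletKernel, walsh_zero]
  | succ m ih =>
    have : dirichletKernel (2 ^ (m+1)) x
        = (1 + walsh (2 ^ m) x) * dirichletKernel (2 ^ m) x := by
      rw [pow_succ, Nat.mul_two, dirichlet_two_pow_add le_rfl x]; ring
    rw [this]
    apply mul_nonneg _ ih
    rcases walsh_values (2^m) x with h | h <;> rw [h] <;> norm_num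

noncomputable def fejerPartial (n : ℕ) (x : WalshG) : ℝ :=
  ∑ k ∈ Finset.Icc 1 n, dirichletKernel k x

lemma fejerPartial_two_pow_succ (n : ℕ) (x : WalshG) :
    fejerPartial (2 ^ (n+1)) x
      = (1 + walsh (2 ^ n) x) * fejerPartial (2 ^ n) x
        + (2 ^ n : ℝ) * dirichletKernel (2 ^ n) x := by
  unfold fejerPartial
  have hsplit : Finset.Icc 1 (2 ^ (n+1)) = Finset.Icc 1 (2^n) ∪ (Finset.Icc 1 (2^n)).image (fun k => 2^n + k) := by
    ext a
    simp only [Finset.mem_union, Finset.mem_Icc, Finset.mem_image]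
    constructor
    · intro ⟨h1, h2⟩
      rcases le_or_gt a (2^n) with h | h
      · exact Or.inl ⟨h1, h⟩
      · refine Or.inr ⟨a - 2^n, ⟨by omega, ?_⟩, by omega⟩
        rw [pow_succ] at h2; omega
    · rintro (⟨h1, h2⟩ | ⟨b, ⟨hb1, hb2⟩, rfl⟩)
      · have := Nat.one_le_two_pow (n := n); rw [pow_succ]; omega
      · rw [pow_succ]; omega
  rw [hsplit, Finset.sum_union, Finset.sum_image (by intro a _ b _ h; beta_reduce at h; omega)]
  · have : ∑ k ∈ Finset.Icc 1 (2^n), dirichletKernel (2^n + k) x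
        = ∑ k ∈ Finset.Icc 1 (2^n), (dirichletKernel (2 ^ n) x + walsh (2 ^ n) x * dirichletKernel k x) := by
      apply Finset.sum_congr rfl
      intro k hk
      simp only [Finset.mem_Icc] at hk
      exact dirichlet_two_pow_add hk.2 x
    rw [this, Finset.sum_add_distrib, ← Finset.mul_sum, Finset.sum_const, Nat.card_Icc]
    push_cast
    ring
  · rw [Finset.disjoint_left]
    intro a ha hb
    simp only [Finset.mem_Icc] at ha
    simp only [Finset.mem_image, Finset.mem_Icc] at hb
    obtain ⟨b, ⟨hb1, _⟩, rfl⟩ := hb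
    omega

lemma fejerPartial_two_pow_nonneg (n : ℕ) (x : WalshG) : 0 ≤ fejerPartial (2 ^ n) x := by
  induction n with
  | zero => simp [fejerPartial, dirichletKernel, walsh_zero]
  | succ m ih =>
    rw [fejerPartial_two_pow_succ]
    apply add_nonneg
    · apply mul_nonneg _ ih
      rcases walsh_values (2^m) x with h | h <;> rw [h] <;> norm_num
    · exact mul_nonneg (by positivity) (dirichlet_two_pow_nonneg m x)

-- === from t4.lean ===

instance : IsProbabilityMeasure μG := by
  constructor
  have := MeasureTheory.Measure.addHaarMeasure_self (K₀ := (⊤ : TopologicalSpace.PositiveCompacts WalshG))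
  simpa [μG] using this

instance : μG.IsAddLeftInvariant := by unfold μG; infer_instance
instance : μG.IsAddRightInvariant := by unfold μG; infer_instance
instance : SigmaFinite μG := by unfold μG; infer_instance

lemma measurableSet_IN (m : ℕ) : MeasurableSet (IN m) := by
  have : IN m = ⋂ k ∈ Finset.range m, {y : WalshG | y k = 0} := by
    ext y; simp [IN]
  rw [this]
  apply MeasurableSet.biInter (Finset.range m).countable_toSet
  intro k _
  exact (measurable_pi_apply k) (MeasurableSet.singleton 0)

/-- the unit vector `e_k`. -/
def eVec (k : ℕ) : WalshG := fun i => if i = k then 1 else 0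

lemma zmod2_cases : ∀ z : ZMod 2, z = 0 ∨ z = 1 := by decide

lemma IN_succ_split (m : ℕ) :
    IN m = IN (m+1) ∪ ((· + eVec m) ⁻¹' (IN (m+1))) := by
  ext y
  simp only [IN, Set.mem_union, Set.mem_setOf_eq, Set.mem_preimage, Pi.add_apply]
  constructor
  · intro h
    rcases zmod2_cases (y m) with h0 | h1
    · left
      intro k hk
      rcases Nat.lt_succ_iff_lt_or_eq.1 hk with h' | h'
      · exact h k h'
      · exact h' ▸ h0
    · right
      intro k hk
      rcases Nat.lt_succ_iff_lt_or_eq.1 hk with h' | h'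
      · have hne : k ≠ m := by omega
        simp [eVec, hne, h k h']
      · subst h'
        rw [h1]
        simp only [eVec, if_pos rfl]
        decide
  · rintro (h | h) k hk
    · exact h k (by omega)
    · have := h k (by omega)
      have hne : k ≠ m := by omega
      simpa [eVec, hne] using this

lemma IN_succ_disjoint (m : ℕ) :
    Disjoint (IN (m+1)) ((· + eVec m) ⁻¹' (IN (m+1))) := by
  rw [Set.disjoint_left]
  intro y h1 h2
  have a1 := h1 m (by omega)
  have a2 := h2 m (by omega)
  simp only [Pi.add_apply] at a2
  rw [a1] at a2
  simp only [eVec, if_pos rfl, zero_add] at a2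
  exact one_ne_zero a2

lemma measure_IN (m : ℕ) : μG (IN m) = (2 ^ m : ℝ≥0∞)⁻¹ := by
  induction m with
  | zero =>
    have : IN 0 = Set.univ := by ext y; simp [IN]
    simp [this]
  | succ n ih =>
    have hmeas : μG ((· + eVec n) ⁻¹' (IN (n+1))) = μG (IN (n+1)) :=
      (measurePreserving_add_right μG (eVec n)).measure_preimage
        (measurableSet_IN (n+1)).nullMeasurableSet
    have key : (2:ℝ≥0∞) * μG (IN (n+1)) = (2 ^ n : ℝ≥0∞)⁻¹ := by
      rw [← ih, IN_succ_split n, measure_union (IN_succ_disjoint n)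
        ((measurableSet_IN (n+1)).preimage (measurable_add_const _)), hmeas, two_mul]
    calc μG (IN (n+1)) = ((2:ℝ≥0∞)⁻¹ * 2) * μG (IN (n+1)) := by
          rw [ENNReal.inv_mul_cancel (by norm_num) (by norm_num), one_mul]
      _ = (2:ℝ≥0∞)⁻¹ * (2 ^ n : ℝ≥0∞)⁻¹ := by rw [mul_assoc, key]
      _ = (2 ^ (n+1) : ℝ≥0∞)⁻¹ := by
          rw [pow_succ, ENNReal.mul_inv (by simp) (by simp), mul_comm]

lemma measurable_walsh (n : ℕ) : Measurable (walsh n) := by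
  unfold walsh
  apply Finset.measurable_prod
  intro k _
  split
  · exact (measurable_of_countable (fun z : ZMod 2 => ((-1:ℝ)) ^ z.val)).comp (measurable_pi_apply k)
  · exact measurable_const


lemma integrable_walsh (n : ℕ) : Integrable (walsh n) μG := by
  refine ⟨(measurable_walsh n).aestronglyMeasurable, ?_⟩
  apply MeasureTheory.HasFiniteIntegral.of_bounded (C := 1)
  filter_upwards with x
  rw [Real.norm_eq_abs, abs_walsh]

lemma walsh_eq_one_on_IN {m j : ℕ} (hj : j < 2 ^ m) {y : WalshG} (hy : y ∈ IN m) :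
    walsh j y = 1 := by
  unfold walsh
  apply Finset.prod_eq_one
  intro k _
  rcases h : j.testBit k with _ | _
  · simp
  · have hk : 2 ^ k ≤ j := Nat.ge_two_pow_of_testBit h
    have : k < m := by
      by_contra hc
      exact absurd (lt_of_le_of_lt hk hj) (not_lt.2 (Nat.pow_le_pow_right (by norm_num) (by omega)))
    rw [hy k this]
    simp

lemma setIntegral_walsh_of_lt {m j : ℕ} (hj : j < 2 ^ m) :
    ∫ y in IN m, walsh j y ∂μG = ((2:ℝ) ^ m)⁻¹ := by
  rw [MeasureTheory.setIntegral_congr_fun (measurableSet_IN m)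
    (fun y hy => walsh_eq_one_on_IN hj hy), MeasureTheory.setIntegral_const, measureReal_def, measure_IN]
  rw [smul_eq_mul, mul_one, ENNReal.toReal_inv]
  norm_num

lemma exists_high_bit {m j : ℕ} (hj : 2 ^ m ≤ j) : ∃ k, m ≤ k ∧ j.testBit k = true := by
  by_contra hc
  push_neg at hc
  have : j = j % 2 ^ m := by
    apply Nat.eq_of_testBit_eq
    intro i
    rw [Nat.testBit_mod_two_pow]
    rcases lt_or_ge i m with h | h
    · simp [h]
    · rw [Bool.eq_false_iff.mpr (hc i h)]
      simp [Nat.not_lt.2 h]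
  have h2 : j % 2 ^ m < 2 ^ m := Nat.mod_lt j (by positivity)
  omega

lemma walsh_add_eVec {j k : ℕ} (hk : j.testBit k = true) (y : WalshG) :
    walsh j (y + eVec k) = - walsh j y := by
  have hkj : k < j := by
    have h1 : 2 ^ k ≤ j := Nat.ge_two_pow_of_testBit hk
    have h2 : k < 2 ^ k := Nat.lt_two_pow_self
    omega
  unfold walsh
  rw [← Finset.mul_prod_erase _ _ (Finset.mem_range.2 hkj),
    ← Finset.mul_prod_erase _ (fun i => if j.testBit i then (-1:ℝ) ^ ((y i).val) else 1)
      (Finset.mem_range.2 hkj)]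
  have h1 : ∀ i ∈ (Finset.range j).erase k,
      (if j.testBit i then (-1:ℝ) ^ (((y + eVec k) i).val) else 1)
        = (if j.testBit i then (-1:ℝ) ^ ((y i).val) else 1) := by
    intro i hi
    have : i ≠ k := Finset.ne_of_mem_erase hi
    simp [eVec, Pi.add_apply, this]
  rw [Finset.prod_congr rfl h1, hk]
  simp only [if_true]
  have : (-1:ℝ) ^ (((y + eVec k) k).val) = -((-1:ℝ) ^ ((y k).val)) := by
    have : (y + eVec k) k = y k + 1 := by simp [eVec, Pi.add_apply]
    rw [this]
    rcases zmod2_cases (y k) with h | h <;> rw [h] <;>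
      norm_num [show ((0:ZMod 2)+1).val = 1 from by decide,
        show ((1:ZMod 2)+1).val = 0 from by decide,
        show (0:ZMod 2).val = 0 from by decide,
        show (1:ZMod 2).val = 1 from by decide, show (2:ZMod 2).val = 0 from by decide]
  rw [this]
  ring

lemma eVec_mem_preimage_IN {m k : ℕ} (hk : m ≤ k) :
    (· + eVec k) ⁻¹' (IN m) = IN m := by
  ext y
  simp only [Set.mem_preimage, IN, Set.mem_setOf_eq, Pi.add_apply]
  have he : ∀ i < m, eVec k i = 0 := by
    intro i hi
    have hne : i ≠ k := by omega
    simp [eVec, hne]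
  constructor
  · intro h i hi
    have := h i hi
    rwa [he i hi, add_zero] at this
  · intro h i hi
    rw [h i hi, he i hi, add_zero]

lemma setIntegral_walsh_of_ge {m j : ℕ} (hj : 2 ^ m ≤ j) :
    ∫ y in IN m, walsh j y ∂μG = 0 := by
  obtain ⟨k, hk, hbit⟩ := exists_high_bit hj
  have hmp : MeasurePreserving (· + eVec k) μG μG := measurePreserving_add_right μG (eVec k)
  have hemb : MeasurableEmbedding (· + eVec k) :=
    (MeasurableEquiv.addRight (eVec k)).measurableEmbedding
  have h1 : ∫ y in IN m, walsh j y ∂μG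
      = ∫ y in (· + eVec k) ⁻¹' (IN m), walsh j (y + eVec k) ∂μG := by
    rw [hmp.setIntegral_preimage_emb hemb]
  rw [eVec_mem_preimage_IN hk] at h1
  have h2 : ∫ y in IN m, walsh j (y + eVec k) ∂μG = - ∫ y in IN m, walsh j y ∂μG := by
    rw [← MeasureTheory.integral_neg]
    apply MeasureTheory.setIntegral_congr_fun (measurableSet_IN m)
    intro y _
    exact walsh_add_eVec hbit y
  have := h1.trans h2
  linarith

-- === from t5.lean ===


lemma integrable_dirichlet (n : ℕ) : Integrable (dirichletKernel n) μG := by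
  unfold dirichletKernel
  exact integrable_finset_sum _ (fun k _ => integrable_walsh k)

lemma integrable_fejerKernel (n : ℕ) : Integrable (fejerKernel n) μG := by
  unfold fejerKernel
  exact (integrable_finset_sum _ (fun k _ => integrable_dirichlet k)).const_mul _

lemma setIntegral_dirichlet (m k : ℕ) :
    ∫ y in IN m, dirichletKernel k y ∂μG = ((min k (2 ^ m) : ℕ) : ℝ) / 2 ^ m := by
  unfold dirichletKernel
  rw [MeasureTheory.integral_finset_sum _
    (fun j _ => (integrable_walsh j).integrableOn)]
  have : ∀ j ∈ Finset.range k, ∫ y in IN m, walsh j y ∂μG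
      = if j < 2 ^ m then ((2:ℝ) ^ m)⁻¹ else 0 := by
    intro j _
    rcases lt_or_ge j (2 ^ m) with h | h
    · rw [setIntegral_walsh_of_lt h, if_pos h]
    · rw [setIntegral_walsh_of_ge h, if_neg (not_lt.2 h)]
  rw [Finset.sum_congr rfl this, Finset.sum_ite, Finset.sum_const, Finset.sum_const,
    smul_zero, add_zero]
  have hcard : (Finset.range k).filter (fun j => j < 2 ^ m) = Finset.range (min k (2^m)) := by
    ext j; simp [Nat.lt_min]
  rw [hcard, Finset.card_range, nsmul_eq_mul]
  rw [div_eq_mul_inv]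

lemma setIntegral_fejer (m n : ℕ) :
    ∫ y in IN m, fejerKernel (2 ^ n) y ∂μG
      = ((2:ℝ) ^ n)⁻¹ * ∑ k ∈ Finset.Icc 1 (2 ^ n), ((min k (2 ^ m) : ℕ) : ℝ) / 2 ^ m := by
  unfold fejerKernel
  rw [MeasureTheory.integral_const_mul, MeasureTheory.integral_finset_sum _
    (fun k _ => (integrable_dirichlet k).integrableOn)]
  rw [Finset.sum_congr rfl (fun k _ => setIntegral_dirichlet m k)]
  norm_num

lemma setIntegral_fejer_le_one (m n : ℕ) :
    ∫ y in IN m, fejerKernel (2 ^ n) y ∂μG ≤ 1 := by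
  rw [setIntegral_fejer]
  have hb : ∀ k ∈ Finset.Icc 1 (2^n), ((min k (2 ^ m) : ℕ) : ℝ) / 2 ^ m ≤ 1 := by
    intro k _
    rw [div_le_one (by positivity)]
    have : min k (2^m) ≤ 2 ^ m := min_le_right _ _
    calc ((min k (2 ^ m) : ℕ) : ℝ) ≤ ((2^m : ℕ) : ℝ) := by exact_mod_cast this
      _ = 2 ^ m := by push_cast; ring
  calc ((2:ℝ) ^ n)⁻¹ * ∑ k ∈ Finset.Icc 1 (2 ^ n), ((min k (2 ^ m) : ℕ) : ℝ) / 2 ^ m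
      ≤ ((2:ℝ) ^ n)⁻¹ * ∑ k ∈ Finset.Icc 1 (2 ^ n), 1 := by
        apply mul_le_mul_of_nonneg_left (Finset.sum_le_sum hb) (by positivity)
    _ = 1 := by
        rw [Finset.sum_const, Nat.card_Icc]
        simp only [Nat.add_sub_cancel, nsmul_eq_mul, mul_one]
        push_cast
        rw [inv_mul_cancel₀ (by positivity)]

lemma min_ratio_bound {s k : ℕ} :
    ((min k (2^s) : ℕ) : ℝ)/2^s - ((min k (2^(s+1)) : ℕ) : ℝ)/2^(s+1)
      ≤ if k ≤ 2^(s+1) then (1:ℝ)/2 else 0 := by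
  have ha : (0:ℝ) < 2^s := by positivity
  have h2 : ((2:ℝ))^(s+1) = 2 * 2^s := by ring
  have hmono : (2:ℕ)^s ≤ 2^(s+1) := Nat.pow_le_pow_right (by norm_num) (by omega)
  rcases le_or_gt k (2^s) with h | h
  · have h' : k ≤ 2^(s+1) := le_trans h hmono
    rw [min_eq_left h, min_eq_left h', if_pos h']
    have hkr : (k:ℝ) ≤ 2^s := by exact_mod_cast h
    rw [h2]
    rw [div_sub_div _ _ (ne_of_gt ha) (by positivity)]
    rw [div_le_div_iff₀ (by positivity) (by norm_num)]
    nlinarith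
  · rcases le_or_gt k (2^(s+1)) with h' | h'
    · rw [min_eq_right (le_of_lt h), min_eq_left h', if_pos h']
      have hkr : (2:ℝ)^s ≤ (k:ℝ) := by exact_mod_cast le_of_lt h
      have hc : ((2^s : ℕ) : ℝ) = (2:ℝ)^s := by push_cast; ring
      rw [hc, h2]
      rw [div_sub_div _ _ (ne_of_gt ha) (by positivity)]
      rw [div_le_div_iff₀ (by positivity) (by norm_num)]
      nlinarith
    · have hsk : (2:ℕ)^s ≤ k := le_trans hmono (le_of_lt h')
      rw [min_eq_right hsk, min_eq_right (le_of_lt h'), if_neg (not_le.2 h')]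
      have hc : ((2^s : ℕ) : ℝ) = (2:ℝ)^s := by push_cast; ring
      have hc2 : ((2^(s+1) : ℕ) : ℝ) = (2:ℝ)^(s+1) := by push_cast; ring
      rw [hc, hc2, div_self (ne_of_gt ha), div_self (by positivity)]
      norm_num

lemma setIntegral_fejer_diff_le {s n : ℕ} (hsn : s + 1 ≤ n) :
    ∫ y in (IN s \ IN (s+1)), fejerKernel (2 ^ n) y ∂μG ≤ (2:ℝ)^s / 2^n := by
  have hsub : IN (s+1) ⊆ IN s := by
    intro y hy k hk
    exact hy k (by omega)
  have hdiff : ∫ y in (IN s \ IN (s+1)), fejerKernel (2 ^ n) y ∂μG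
      = (∫ y in IN s, fejerKernel (2 ^ n) y ∂μG) - ∫ y in IN (s+1), fejerKernel (2 ^ n) y ∂μG :=
    MeasureTheory.integral_diff (measurableSet_IN (s+1))
      (integrable_fejerKernel (2^n)).integrableOn hsub
  rw [hdiff, setIntegral_fejer, setIntegral_fejer, ← mul_sub, ← Finset.sum_sub_distrib]
  have hbound : ∑ k ∈ Finset.Icc 1 (2 ^ n),
      (((min k (2 ^ s) : ℕ) : ℝ) / 2 ^ s - ((min k (2 ^ (s+1)) : ℕ) : ℝ) / 2 ^ (s+1))
      ≤ (2:ℝ)^s := by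
    have hmono : (2:ℕ)^(s+1) ≤ 2^n := Nat.pow_le_pow_right (by norm_num) hsn
    calc ∑ k ∈ Finset.Icc 1 (2 ^ n),
        (((min k (2 ^ s) : ℕ) : ℝ) / 2 ^ s - ((min k (2 ^ (s+1)) : ℕ) : ℝ) / 2 ^ (s+1))
        ≤ ∑ k ∈ Finset.Icc 1 (2 ^ n), (if k ≤ 2^(s+1) then (1:ℝ)/2 else 0) :=
          Finset.sum_le_sum (fun k _ => min_ratio_bound)
      _ = (2:ℝ)^s := by
          rw [Finset.sum_ite, Finset.sum_const, Finset.sum_const, smul_zero, add_zero]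
          have hfil : (Finset.Icc 1 (2^n)).filter (fun k => k ≤ 2 ^ (s+1))
              = Finset.Icc 1 (2^(s+1)) := by
            ext k
            simp only [Finset.mem_filter, Finset.mem_Icc]
            omega
          rw [hfil, Nat.card_Icc, nsmul_eq_mul]
          push_cast
          ring
  calc ((2:ℝ) ^ n)⁻¹ * ∑ k ∈ Finset.Icc 1 (2 ^ n),
      (((min k (2 ^ s) : ℕ) : ℝ) / 2 ^ s - ((min k (2 ^ (s+1)) : ℕ) : ℝ) / 2 ^ (s+1))
      ≤ ((2:ℝ) ^ n)⁻¹ * (2:ℝ)^s := mul_le_mul_of_nonneg_left hbound (by positivity)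
    _ = (2:ℝ)^s / 2^n := by rw [div_eq_mul_inv]; ring

-- === from t6.lean ===


lemma measurable_dirichlet (n : ℕ) : Measurable (dirichletKernel n) :=
  Finset.measurable_sum _ (fun k _ => measurable_walsh k)

lemma measurable_fejerKernel (n : ℕ) : Measurable (fejerKernel n) :=
  (Finset.measurable_sum _ (fun k _ => measurable_dirichlet k)).const_mul _

lemma fejerKernel_two_pow_nonneg (n : ℕ) (x : WalshG) : 0 ≤ fejerKernel (2 ^ n) x := by
  have h := fejerPartial_two_pow_nonneg n x
  unfold fejerPartial at h
  exact mul_nonneg (by positivity) h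

lemma abs_dirichlet_le (k : ℕ) (x : WalshG) : |dirichletKernel k x| ≤ (k : ℝ) := by
  unfold dirichletKernel
  calc |∑ j ∈ Finset.range k, walsh j x| ≤ ∑ j ∈ Finset.range k, |walsh j x| :=
        Finset.abs_sum_le_sum_abs _ _
    _ = (k : ℝ) := by
        rw [Finset.sum_congr rfl (fun j _ => abs_walsh j x), Finset.sum_const,
          Finset.card_range, nsmul_eq_mul, mul_one]

lemma abs_fejerKernel_le (n : ℕ) (x : WalshG) : |fejerKernel (2 ^ n) x| ≤ 2 ^ n := by
  unfold fejerKernel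
  have hN : (0:ℝ) < ((2^n : ℕ) : ℝ) := by positivity
  rw [abs_mul, abs_of_nonneg (by positivity : (0:ℝ) ≤ 1 / ((2^n : ℕ) : ℝ))]
  have hsum : |∑ k ∈ Finset.Icc 1 (2^n), dirichletKernel k x|
      ≤ ((2^n : ℕ) : ℝ) * ((2^n : ℕ) : ℝ) := by
    calc |∑ k ∈ Finset.Icc 1 (2^n), dirichletKernel k x|
        ≤ ∑ k ∈ Finset.Icc 1 (2^n), |dirichletKernel k x| := Finset.abs_sum_le_sum_abs _ _
      _ ≤ ∑ k ∈ Finset.Icc 1 (2^n), ((2^n : ℕ) : ℝ) := by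
          apply Finset.sum_le_sum
          intro k hk
          simp only [Finset.mem_Icc] at hk
          exact (abs_dirichlet_le k x).trans (by exact_mod_cast hk.2)
      _ = ((2^n : ℕ) : ℝ) * ((2^n : ℕ) : ℝ) := by
          rw [Finset.sum_const, Nat.card_Icc, nsmul_eq_mul]
          norm_num
  calc 1 / ((2^n : ℕ) : ℝ) * |∑ k ∈ Finset.Icc 1 (2^n), dirichletKernel k x|
      ≤ 1 / ((2^n : ℕ) : ℝ) * (((2^n : ℕ) : ℝ) * ((2^n : ℕ) : ℝ)) :=
        mul_le_mul_of_nonneg_left hsum (by positivity)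
    _ = ((2^n : ℕ) : ℝ) := by field_simp
    _ = (2:ℝ) ^ n := by push_cast; ring

section aux
variable {p : ℝ} (hp : 1 ≤ p) {f : WalshG → ℝ} (hfm : Measurable f)
  (hf : MemLp f (ENNReal.ofReal p) μG)

lemma lpTransDiff_nonneg (t : WalshG) : 0 ≤ lpTransDiff p f t :=
  ENNReal.toReal_nonneg

include hp hfm hf in
lemma lpTransDiff_le_bound (t : WalshG) : lpTransDiff p f t ≤ 2 * lpNorm p f := by
  unfold lpTransDiff _root_.lpNorm
  have hmp : MeasurePreserving (· + t) μG μG := measurePreserving_add_right μG t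
  have hcomp : eLpNorm (fun x => f (x + t)) (ENNReal.ofReal p) μG
      = eLpNorm f (ENNReal.ofReal p) μG :=
    eLpNorm_comp_measurePreserving hf.1 hmp
  have h1 : (1:ℝ≥0∞) ≤ ENNReal.ofReal p := by
    rw [← ENNReal.ofReal_one]
    exact ENNReal.ofReal_le_ofReal hp
  have hsub : eLpNorm (fun x => f (x + t) - f x) (ENNReal.ofReal p) μG
      ≤ eLpNorm (fun x => f (x + t)) (ENNReal.ofReal p) μG
        + eLpNorm f (ENNReal.ofReal p) μG := by
    exact eLpNorm_sub_le ((hfm.comp (measurable_add_const t)).aestronglyMeasurable) hf.1 h1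
  rw [hcomp] at hsub
  have hfin : eLpNorm f (ENNReal.ofReal p) μG < ⊤ := hf.2
  calc (eLpNorm (fun x => f (x + t) - f x) (ENNReal.ofReal p) μG).toReal
      ≤ (eLpNorm f (ENNReal.ofReal p) μG + eLpNorm f (ENNReal.ofReal p) μG).toReal :=
        ENNReal.toReal_mono (by finiteness) hsub
    _ = 2 * (eLpNorm f (ENNReal.ofReal p) μG).toReal := by
        rw [ENNReal.toReal_add hfin.ne hfin.ne]; ring

include hp hfm hf in
lemma bddAbove_aux (N : ℕ) :
    BddAbove (Set.range fun t => ⨆ _ : t ∈ IN N, lpTransDiff p f t) := by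
  refine ⟨max (2 * lpNorm p f) 0, ?_⟩
  rintro x ⟨t, rfl⟩
  dsimp only
  rcases Classical.em (t ∈ IN N) with h | h
  · rw [ciSup_pos h]
    exact le_max_of_le_left (lpTransDiff_le_bound hp hfm hf t)
  · have : IsEmpty (t ∈ IN N) := ⟨h⟩
    rw [Real.iSup_of_isEmpty]
    exact le_max_right _ _

include hp hfm hf in
lemma lpTransDiff_le_modulus {N : ℕ} {t : WalshG} (ht : t ∈ IN N) :
    lpTransDiff p f t ≤ modulus p f N := by
  unfold modulus
  have := le_ciSup (bddAbove_aux hp hfm hf N) t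
  rwa [ciSup_pos ht] at this

include hp hfm hf in
lemma modulus_nonneg (N : ℕ) : 0 ≤ modulus p f N := by
  have h0 : (0 : WalshG) ∈ IN N := by intro k _; rfl
  have := lpTransDiff_le_modulus hp hfm hf h0
  refine le_trans ?_ this
  exact lpTransDiff_nonneg 0

include hfm in
lemma measurable_lpTransDiff (hp0 : 1 ≤ p) : Measurable (lpTransDiff p f) := by
  have hpne : ENNReal.ofReal p ≠ 0 := by
    simp only [ne_eq, ENNReal.ofReal_eq_zero, not_le]; linarith
  have hpnt : ENNReal.ofReal p ≠ ⊤ := ENNReal.ofReal_ne_top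
  have heq : ∀ t, lpTransDiff p f t
      = ((∫⁻ x, (‖f (x + t) - f x‖₊ : ℝ≥0∞) ^ (ENNReal.ofReal p).toReal ∂μG)
          ^ (1 / (ENNReal.ofReal p).toReal)).toReal := by
    intro t
    unfold lpTransDiff _root_.lpNorm
    exact congrArg ENNReal.toReal (eLpNorm_eq_lintegral_rpow_enorm_toReal hpne hpnt)
  have hjm : Measurable fun q : WalshG × WalshG => (‖f (q.2 + q.1) - f q.2‖₊ : ℝ≥0∞) ^ (ENNReal.ofReal p).toReal := by
    apply Measurable.pow_const
    apply Measurable.coe_nnreal_ennreal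
    apply Measurable.nnnorm
    exact (hfm.comp (measurable_snd.add measurable_fst)).sub (hfm.comp measurable_snd)
  have hm : Measurable fun t => ∫⁻ x, (‖f (x + t) - f x‖₊ : ℝ≥0∞) ^ (ENNReal.ofReal p).toReal ∂μG :=
    Measurable.lintegral_prod_right' hjm
  rw [funext heq]
  exact (hm.pow_const _).ennreal_toReal
end aux


section main
variable {p : ℝ} (hp : 1 ≤ p) {f : WalshG → ℝ} (hfm : Measurable f)
  (hf : MemLp f (ENNReal.ofReal p) μG) (n : ℕ)

include hp hfm hf in
lemma integrable_gK :
    Integrable (fun t => lpTransDiff p f t * fejerKernel (2 ^ n) t) μG := by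
  refine ⟨((measurable_lpTransDiff hfm hp).mul (measurable_fejerKernel (2^n))).aestronglyMeasurable, ?_⟩
  apply MeasureTheory.HasFiniteIntegral.of_bounded (C := (2 * lpNorm p f) * 2 ^ n)
  filter_upwards with t
  rw [Real.norm_eq_abs, abs_mul]
  apply mul_le_mul
  · rw [abs_of_nonneg (lpTransDiff_nonneg t)]
    exact lpTransDiff_le_bound hp hfm hf t
  · exact abs_fejerKernel_le n t
  · exact abs_nonneg _
  · have := lpTransDiff_le_bound hp hfm hf t
    have h2 := lpTransDiff_nonneg (p := p) (f := f) t
    linarith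

lemma decomp {F : WalshG → ℝ} (hF : Integrable F μG) (j : ℕ) :
    ∫ t, F t ∂μG = (∑ s ∈ Finset.range j, ∫ t in (IN s \ IN (s+1)), F t ∂μG)
      + ∫ t in IN j, F t ∂μG := by
  induction j with
  | zero =>
    have h0 : IN 0 = Set.univ := by ext y; simp [IN]
    rw [Finset.sum_range_zero, zero_add, h0, MeasureTheory.setIntegral_univ]
  | succ m ih =>
    have hsub : IN (m+1) ⊆ IN m := fun y hy k hk => hy k (by omega)
    have hdiff : ∫ t in (IN m \ IN (m+1)), F t ∂μG
        = (∫ t in IN m, F t ∂μG) - ∫ t in IN (m+1), F t ∂μG :=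
      MeasureTheory.integral_diff (measurableSet_IN (m+1)) hF.integrableOn hsub
    rw [ih, Finset.sum_range_succ, hdiff]
    ring

include hp hfm hf in
theorem main_aux :
    ∫ t, lpTransDiff p f t * fejerKernel (2 ^ n) t ∂μG ≤
      ∑ s ∈ Finset.range (n + 1), (2 : ℝ) ^ s / 2 ^ n * modulus p f s := by
  set g := lpTransDiff p f with hg
  set K := fejerKernel (2 ^ n) with hK
  have hint := integrable_gK hp hfm hf n
  rw [decomp hint n, Finset.sum_range_succ]
  have hKint : Integrable K μG := integrable_fejerKernel (2^n)
  have step1 : ∀ s, s + 1 ≤ n → ∫ t in (IN s \ IN (s+1)), g t * K t ∂μG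
      ≤ (2:ℝ)^s / 2^n * modulus p f s := by
    intro s hsn
    have hEs : MeasurableSet (IN s \ IN (s+1)) :=
      (measurableSet_IN s).diff (measurableSet_IN (s+1))
    have h1 : ∫ t in (IN s \ IN (s+1)), g t * K t ∂μG
        ≤ ∫ t in (IN s \ IN (s+1)), modulus p f s * K t ∂μG := by
      apply MeasureTheory.setIntegral_mono_on hint.integrableOn
        (hKint.const_mul _).integrableOn hEs
      intro t ht
      exact mul_le_mul_of_nonneg_right (lpTransDiff_le_modulus hp hfm hf ht.1)
        (fejerKernel_two_pow_nonneg n t)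
    have h2 : ∫ t in (IN s \ IN (s+1)), modulus p f s * K t ∂μG
        = modulus p f s * ∫ t in (IN s \ IN (s+1)), K t ∂μG := by
      rw [MeasureTheory.integral_const_mul]
    have h3 : modulus p f s * ∫ t in (IN s \ IN (s+1)), K t ∂μG
        ≤ modulus p f s * ((2:ℝ)^s / 2^n) :=
      mul_le_mul_of_nonneg_left (setIntegral_fejer_diff_le hsn)
        (modulus_nonneg hp hfm hf s)
    calc ∫ t in (IN s \ IN (s+1)), g t * K t ∂μG
        ≤ modulus p f s * ((2:ℝ)^s / 2^n) := (h1.trans_eq h2).trans h3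
      _ = (2:ℝ)^s / 2^n * modulus p f s := by ring
  have step2 : ∫ t in IN n, g t * K t ∂μG ≤ (2:ℝ)^n / 2^n * modulus p f n := by
    have h1 : ∫ t in IN n, g t * K t ∂μG
        ≤ ∫ t in IN n, modulus p f n * K t ∂μG := by
      apply MeasureTheory.setIntegral_mono_on hint.integrableOn
        (hKint.const_mul _).integrableOn (measurableSet_IN n)
      intro t ht
      exact mul_le_mul_of_nonneg_right (lpTransDiff_le_modulus hp hfm hf ht)
        (fejerKernel_two_pow_nonneg n t)
    have h2 : ∫ t in IN n, modulus p f n * K t ∂μG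
        = modulus p f n * ∫ t in IN n, K t ∂μG := MeasureTheory.integral_const_mul _ _
    have h3 : modulus p f n * ∫ t in IN n, K t ∂μG ≤ modulus p f n * 1 :=
      mul_le_mul_of_nonneg_left (setIntegral_fejer_le_one n n)
        (modulus_nonneg hp hfm hf n)
    have h4 : (2:ℝ)^n / 2^n = 1 := div_self (by positivity)
    calc ∫ t in IN n, g t * K t ∂μG ≤ modulus p f n * 1 := (h1.trans_eq h2).trans h3
      _ = (2:ℝ)^n / 2^n * modulus p f n := by rw [h4]; ring
  have hsum : ∑ s ∈ Finset.range n, ∫ t in (IN s \ IN (s+1)), g t * K t ∂μG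
      ≤ ∑ s ∈ Finset.range n, (2:ℝ)^s / 2^n * modulus p f s := by
    apply Finset.sum_le_sum
    intro s hs
    exact step1 s (Finset.mem_range.1 hs)
  exact add_le_add hsum step2
end main

/-- the Fejér-kernel modulus estimate for kernels of order `2^n`. -/
theorem fejer_kernel_modulus_estimate
    (p : ℝ) (hp : 1 ≤ p)
    (f : WalshG → ℝ) (hf : MemLp f (ENNReal.ofReal p) μG) (n : ℕ) :
    ∫ t, lpTransDiff p f t * fejerKernel (2 ^ n) t ∂μG ≤
      ∑ s ∈ Finset.range (n + 1), (2 : ℝ) ^ s / 2 ^ n * modulus p f s := by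
  have hf1 := hf.1
  set f' := hf1.mk f with hf'def
  have hae : f =ᵐ[μG] f' := hf1.ae_eq_mk
  have hfm : Measurable f' := hf1.stronglyMeasurable_mk.measurable
  have hf' : MemLp f' (ENNReal.ofReal p) μG := hf.ae_eq hae
  have hdiff : ∀ t, lpTransDiff p f t = lpTransDiff p f' t := by
    intro t
    unfold lpTransDiff _root_.lpNorm
    congr 1
    apply eLpNorm_congr_ae
    have h1 : (fun x => f (x + t)) =ᵐ[μG] (fun x => f' (x + t)) :=
      (measurePreserving_add_right μG t).quasiMeasurePreserving.ae_eq hae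
    exact h1.sub hae
  have hmod : modulus p f = modulus p f' := by
    unfold modulus
    rw [funext hdiff]
  have hLHS : ∫ t, lpTransDiff p f t * fejerKernel (2 ^ n) t ∂μG
      = ∫ t, lpTransDiff p f' t * fejerKernel (2 ^ n) t ∂μG := by
    simp only [hdiff]
  rw [hLHS, hmod]
  exact main_aux hp hfm hf' n
end

section
/- Let 1 ≤ p < ∞. Then for every f ∈ L^p(G,μ) and all j, k ∈ ℕ with 2^k ≤ j ≤ 2^{k+1} − 1, one has j·∫_G ‖f(·+t) − f(·)‖_p |K_j(t)| dμ(t) ≤ 3 Σ_{l=0}^{k} Σ_{s=0}^{l} 2^s ω_p(1/2^s, f), where for each t ∈ G the quantity ‖f(·+t) − f(·)‖_p is the L^p norm of x ↦ f(x+t) − f(x). -/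
open MeasureTheory Finset Filter Topology

/-! ### Auxiliary lemmas -/

open scoped Classical

namespace FejerAux

instance : μG.IsAddHaarMeasure := by rw [μG]; infer_instance

instance : IsProbabilityMeasure μG := by
  constructor
  rw [μG, show (Set.univ : Set WalshG)
      = ((⊤ : TopologicalSpace.PositiveCompacts WalshG) : Set WalshG) from
        (TopologicalSpace.PositiveCompacts.coe_top).symm]
  exact Measure.addHaarMeasure_self

lemma measPres (t : WalshG) : MeasurePreserving (· + t) μG μG :=
  measurePreserving_add_right μG t

def ZS (S : Finset ℕ) : Set WalshG := {x | ∀ i ∈ S, x i = 0}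

lemma measurableSet_ZS (S : Finset ℕ) : MeasurableSet (ZS S) := by
  have h : ZS S = ⋂ i ∈ S, (fun x : WalshG => x i) ⁻¹' {0} := by
    ext x; simp [ZS]
  rw [h]
  exact MeasurableSet.biInter S.countable_toSet
    (fun i _ => (measurable_pi_apply i) (measurableSet_singleton 0))

lemma zmod2_cases (y : ZMod 2) : y = 0 ∨ y = 1 := by revert y; decide

lemma measure_ZS (S : Finset ℕ) : μG (ZS S) = (2 : ENNReal)⁻¹ ^ S.card := by
  induction S using Finset.induction with
  | empty => simp [ZS]
  | @insert a S ha ih =>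
    set e : WalshG := fun i => if i = a then 1 else 0 with he
    have hpre : (· + e) ⁻¹' (ZS (insert a S)) = {x : WalshG | x a = 1 ∧ x ∈ ZS S} := by
      ext x
      simp only [Set.mem_preimage, ZS, Set.mem_setOf_eq, Finset.mem_insert]
      constructor
      · intro h
        have h1 := h a (Or.inl rfl)
        simp only [Pi.add_apply, he, if_pos rfl] at h1
        refine ⟨?_, fun i hi => ?_⟩
        · rcases zmod2_cases (x a) with h0 | h0
          · rw [h0] at h1; simp at h1
          · exact h0
        · have h2 := h i (Or.inr hi)
          have hia : i ≠ a := fun hh => ha (hh ▸ hi)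
          simpa [Pi.add_apply, he, hia] using h2
      · rintro ⟨h1, h2⟩ i hi
        rcases hi with rfl | hi
        · simp only [Pi.add_apply, he, if_pos rfl, h1]; decide
        · have hia : i ≠ a := fun hh => ha (hh ▸ hi)
          simp [Pi.add_apply, he, hia, h2 i hi]
    have hsplit : ZS S = ZS (insert a S) ∪ {x : WalshG | x a = 1 ∧ x ∈ ZS S} := by
      ext x
      simp only [Set.mem_union, ZS, Set.mem_setOf_eq, Finset.mem_insert]
      constructor
      · intro h
        rcases zmod2_cases (x a) with h0 | h0
        · left
          intro i hi
          rcases hi with rfl | hi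
          · exact h0
          · exact h i hi
        · right; exact ⟨h0, h⟩
      · rintro (h | ⟨h1, h2⟩) i hi
        · exact h i (Or.inr hi)
        · exact h2 i hi
    have hmB : MeasurableSet {x : WalshG | x a = 1 ∧ x ∈ ZS S} := by
      have : {x : WalshG | x a = 1 ∧ x ∈ ZS S}
          = ((fun x : WalshG => x a) ⁻¹' {1}) ∩ ZS S := by ext x; simp [ZS]
      rw [this]
      exact ((measurable_pi_apply a) (measurableSet_singleton 1)).inter (measurableSet_ZS S)
    have hdisj : Disjoint (ZS (insert a S)) {x : WalshG | x a = 1 ∧ x ∈ ZS S} := by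
      rw [Set.disjoint_left]
      rintro x hx ⟨h1, _⟩
      have := hx a (Finset.mem_insert_self a S)
      rw [this] at h1; exact absurd h1 (by decide)
    have hBeq : μG {x : WalshG | x a = 1 ∧ x ∈ ZS S} = μG (ZS (insert a S)) := by
      rw [← hpre]
      exact (measPres e).measure_preimage (measurableSet_ZS _).nullMeasurableSet
    have hadd : μG (ZS S) = μG (ZS (insert a S)) + μG (ZS (insert a S)) := by
      rw [hsplit, measure_union hdisj hmB, hBeq]
    have h2 : (2 : ENNReal) * μG (ZS (insert a S)) = μG (ZS S) := by
      rw [two_mul]; exact hadd.symm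
    have : μG (ZS (insert a S)) = (2 : ENNReal)⁻¹ * μG (ZS S) := by
      rw [← h2, ← mul_assoc, ENNReal.inv_mul_cancel (by norm_num) (by norm_num), one_mul]
    rw [this, ih, Finset.card_insert_of_notMem ha, pow_succ, mul_comm]

lemma IN_eq_ZS (n : ℕ) : IN n = ZS (Finset.range n) := by
  ext x; simp [IN, ZS]

lemma measure_IN (n : ℕ) : μG (IN n) = (2 : ENNReal)⁻¹ ^ n := by
  rw [IN_eq_ZS, measure_ZS, Finset.card_range]

lemma measurableSet_IN (n : ℕ) : MeasurableSet (IN n) := by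
  rw [IN_eq_ZS]; exact measurableSet_ZS _

lemma toReal_measure_IN (n : ℕ) : (μG (IN n)).toReal = (2 : ℝ)⁻¹ ^ n := by
  rw [measure_IN]; simp [ENNReal.toReal_pow]

/-! ### Walsh function combinatorics -/

lemma testBit_false_of_le {n i : ℕ} (h : n ≤ i) : n.testBit i = false :=
  Nat.testBit_lt_two_pow (lt_of_le_of_lt h (Nat.lt_two_pow_self (n := i)))

lemma walsh_eq_prod (n M : ℕ) (h : n ≤ M) (x : WalshG) :
    walsh n x = ∏ k ∈ Finset.range M, if n.testBit k then (-1 : ℝ) ^ ((x k).val) else 1 := by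
  rw [walsh]
  apply Finset.prod_subset (Finset.range_subset_range.2 h)
  intro i _ hi
  rw [Finset.mem_range, not_lt] at hi
  rw [testBit_false_of_le hi]
  simp

lemma walsh_two_pow (A : ℕ) (x : WalshG) : walsh (2 ^ A) x = (-1 : ℝ) ^ ((x A).val) := by
  rw [walsh]
  rw [Finset.prod_eq_single A]
  · rw [Nat.testBit_two_pow_self]; simp
  · intro b _ hb
    rw [Nat.testBit_two_pow_of_ne (Ne.symm hb)]; simp
  · intro h
    exact absurd (Finset.mem_range.2 (Nat.lt_two_pow_self (n := A))) h

lemma testBit_two_pow_add {A k i : ℕ} (hk : k < 2 ^ A) :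
    (2 ^ A + k).testBit i = ((2 ^ A).testBit i || k.testBit i) := by
  rcases lt_trichotomy i A with h | h | h
  · rw [Nat.testBit_two_pow_add_gt h, Nat.testBit_two_pow_of_ne (by omega)]
    simp
  · subst h
    rw [Nat.testBit_two_pow_add_eq, Nat.testBit_lt_two_pow hk, Nat.testBit_two_pow_self]
    simp
  · have h1 : 2 ^ A + k < 2 ^ i := by
      calc 2 ^ A + k < 2 ^ A + 2 ^ A := by omega
      _ = 2 ^ (A + 1) := by ring
      _ ≤ 2 ^ i := Nat.pow_le_pow_right (by norm_num) h
    rw [Nat.testBit_lt_two_pow h1, Nat.testBit_two_pow_of_ne (by omega),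
      Nat.testBit_lt_two_pow (lt_trans hk (by omega))]
    simp

lemma walsh_two_pow_add {A k : ℕ} (hk : k < 2 ^ A) (x : WalshG) :
    walsh (2 ^ A + k) x = walsh (2 ^ A) x * walsh k x := by
  rw [walsh_eq_prod (2 ^ A + k) (2 ^ A + k) le_rfl x,
    walsh_eq_prod (2 ^ A) (2 ^ A + k) (by omega) x,
    walsh_eq_prod k (2 ^ A + k) (by omega) x, ← Finset.prod_mul_distrib]
  apply Finset.prod_congr rfl
  intro i _
  rw [testBit_two_pow_add hk]
  by_cases h2 : (2 ^ A).testBit i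
  · have hiA : i = A := by
      by_contra hne
      rw [Nat.testBit_two_pow_of_ne (Ne.symm hne)] at h2
      exact Bool.noConfusion h2
    subst hiA
    rw [Nat.testBit_lt_two_pow hk] at *
    simp [h2]
  · simp only [h2, Bool.false_or]
    by_cases h3 : k.testBit i <;> simp [h3, eq_false_of_ne_true h2]

lemma dirichlet_one (x : WalshG) : dirichletKernel 1 x = 1 := by
  simp [dirichletKernel, walsh]

lemma dirichlet_two_pow_succ (n : ℕ) (x : WalshG) :
    dirichletKernel (2 ^ (n + 1)) x = (1 + walsh (2 ^ n) x) * dirichletKernel (2 ^ n) x := by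
  rw [dirichletKernel, show 2 ^ (n + 1) = 2 ^ n + 2 ^ n by ring, Finset.sum_range_add]
  rw [add_mul, one_mul, dirichletKernel, Finset.mul_sum]
  congr 1
  exact Finset.sum_congr rfl fun i hi => walsh_two_pow_add (Finset.mem_range.mp hi) x

lemma mem_IN_succ {x : WalshG} {n : ℕ} : x ∈ IN (n + 1) ↔ x ∈ IN n ∧ x n = 0 := by
  constructor
  · intro h; exact ⟨fun k hk => h k (by omega), h n (by omega)⟩
  · rintro ⟨h1, h2⟩ k hk
    rcases Nat.lt_succ_iff_lt_or_eq.mp hk with hk | rfl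
    · exact h1 k hk
    · exact h2

lemma dirichlet_two_pow (n : ℕ) (x : WalshG) :
    dirichletKernel (2 ^ n) x = if x ∈ IN n then (2 ^ n : ℝ) else 0 := by
  induction n with
  | zero =>
    have : x ∈ IN 0 := fun k hk => absurd hk (by omega)
    simpa [this] using dirichlet_one x
  | succ n ih =>
    rw [dirichlet_two_pow_succ, ih, walsh_two_pow]
    rcases zmod2_cases (x n) with h | h
    · rw [h]
      have hval : ((0 : ZMod 2)).val = 0 := rfl
      rw [hval, pow_zero]
      by_cases hx : x ∈ IN n
      · have hx' : x ∈ IN (n + 1) := mem_IN_succ.mpr ⟨hx, h⟩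
        rw [if_pos hx, if_pos hx']
        ring
      · have hx' : x ∉ IN (n + 1) := fun hh => hx (mem_IN_succ.mp hh).1
        rw [if_neg hx, if_neg hx']
        ring
    · rw [h]
      have hval : ((1 : ZMod 2)).val = 1 := rfl
      have hx' : x ∉ IN (n + 1) := by
        intro hh
        have := (mem_IN_succ.mp hh).2
        rw [h] at this; exact absurd this (by decide)
      rw [hval, pow_one, if_neg hx']
      ring

/-! ### The kernels `n K_n` -/

noncomputable def KK (n : ℕ) (x : WalshG) : ℝ := ∑ k ∈ Finset.Icc 1 n, dirichletKernel k x

lemma KK_eq_range (n : ℕ) (x : WalshG) :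
    KK n x = ∑ i ∈ Finset.range n, dirichletKernel (1 + i) x := by
  rw [KK, show Finset.Icc 1 n = Finset.Ico 1 (n + 1) by rw [Finset.Ico_add_one_right_eq_Icc],
    Finset.sum_Ico_eq_sum_range]
  simp

lemma dirichlet_add {A k : ℕ} (hk : k ≤ 2 ^ A) (x : WalshG) :
    dirichletKernel (2 ^ A + k) x
      = dirichletKernel (2 ^ A) x + walsh (2 ^ A) x * dirichletKernel k x := by
  rw [dirichletKernel, Finset.sum_range_add]
  rw [dirichletKernel, dirichletKernel, Finset.mul_sum]
  congr 1
  exact Finset.sum_congr rfl fun i hi =>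
    walsh_two_pow_add (lt_of_lt_of_le (Finset.mem_range.mp hi) hk) x

lemma KK_add {A m : ℕ} (hm : m ≤ 2 ^ A) (x : WalshG) :
    KK (2 ^ A + m) x
      = KK (2 ^ A) x + m * dirichletKernel (2 ^ A) x + walsh (2 ^ A) x * KK m x := by
  rw [KK_eq_range, Finset.sum_range_add, ← KK_eq_range]
  have h2 : ∀ i ∈ Finset.range m, dirichletKernel (1 + (2 ^ A + i)) x
      = dirichletKernel (2 ^ A) x + walsh (2 ^ A) x * dirichletKernel (1 + i) x := by
    intro i hi
    rw [show 1 + (2 ^ A + i) = 2 ^ A + (1 + i) by omega]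
    exact dirichlet_add (by have := Finset.mem_range.mp hi; omega) x
  rw [Finset.sum_congr rfl h2, Finset.sum_add_distrib, Finset.sum_const, ← Finset.mul_sum,
    ← KK_eq_range, Finset.card_range]
  push_cast
  ring

lemma KK_two_pow_succ (n : ℕ) (x : WalshG) :
    KK (2 ^ (n + 1)) x
      = (1 + walsh (2 ^ n) x) * KK (2 ^ n) x + 2 ^ n * dirichletKernel (2 ^ n) x := by
  have h := KK_add (A := n) (m := 2 ^ n) le_rfl x
  rw [show (2:ℕ) ^ n + 2 ^ n = 2 ^ (n + 1) by ring] at h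
  rw [h]
  push_cast
  ring

def Bset (n i : ℕ) : Set WalshG := {x | ∀ j < n, j ≠ i → x j = 0}

lemma KK_one (x : WalshG) : KK 1 x = 1 := by
  rw [KK]
  simp [dirichlet_one]

lemma KK_two_pow_eq (n : ℕ) (x : WalshG) :
    KK (2 ^ n) x
      = (∑ i ∈ Finset.range n, (2 : ℝ) ^ (n - 1 + i) * (if x ∈ Bset n i then 1 else 0))
        + 2 ^ n * (if x ∈ IN n then 1 else 0) := by
  induction n with
  | zero =>
    have : x ∈ IN 0 := fun k hk => absurd hk (by omega)
    simp [KK_one, this]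
  | succ n ih =>
    rw [KK_two_pow_succ, ih, walsh_two_pow, dirichlet_two_pow, Finset.sum_range_succ]
    have hBn : (x ∈ Bset (n + 1) n) ↔ x ∈ IN n := by
      constructor
      · intro h j hj; exact h j (by omega) (by omega)
      · intro h j hj hne; exact h j (by omega)
    rcases zmod2_cases (x n) with h | h
    · have hval : ((0 : ZMod 2)).val = 0 := rfl
      rw [h, hval, pow_zero]
      have hB : ∀ i ∈ Finset.range n, (if x ∈ Bset (n + 1) i then (1:ℝ) else 0)
          = if x ∈ Bset n i then 1 else 0 := by
        intro i hi
        have hi' := Finset.mem_range.mp hi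
        have : (x ∈ Bset (n + 1) i) ↔ x ∈ Bset n i := by
          constructor
          · intro hh j hj hne; exact hh j (by omega) hne
          · intro hh j hj hne
            rcases Nat.lt_succ_iff_lt_or_eq.mp hj with hj' | rfl
            · exact hh j hj' hne
            · exact h
        rw [this]
      have hIN : (x ∈ IN (n + 1)) ↔ x ∈ IN n := by
        rw [mem_IN_succ]; exact ⟨fun hh => hh.1, fun hh => ⟨hh, h⟩⟩
      have hsum : ∑ i ∈ Finset.range n, (2 : ℝ) ^ (n + 1 - 1 + i) * (if x ∈ Bset (n + 1) i then 1 else 0)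
          = 2 * ∑ i ∈ Finset.range n, (2 : ℝ) ^ (n - 1 + i) * (if x ∈ Bset n i then 1 else 0) := by
        rw [Finset.mul_sum]
        apply Finset.sum_congr rfl
        intro i hi
        rw [hB i hi]
        have hi' := Finset.mem_range.mp hi
        have hexp : n + 1 - 1 + i = (n - 1 + i) + 1 := by omega
        rw [hexp, pow_succ]
        ring
      rw [hsum, hBn, hIN]
      by_cases hx : x ∈ IN n
      · simp only [if_pos hx]
        have hexp2 : n + 1 - 1 + n = n + n := by omega
        rw [hexp2, pow_add, pow_succ]
        ring
      · simp only [if_neg hx]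
        ring
    · have hval : ((1 : ZMod 2)).val = 1 := rfl
      rw [h, hval, pow_one]
      have hIN' : x ∉ IN (n + 1) := by
        intro hh
        have h2 := (mem_IN_succ.mp hh).2
        rw [h] at h2; exact absurd h2 (by decide)
      have hBi : ∀ i ∈ Finset.range n, (2:ℝ) ^ (n + 1 - 1 + i) * (if x ∈ Bset (n + 1) i then (1:ℝ) else 0) = 0 := by
        intro i hi
        rw [if_neg, mul_zero]
        intro hh
        have h2 := hh n (by omega) (by have := Finset.mem_range.mp hi; omega)
        rw [h] at h2; exact absurd h2 (by decide)
      rw [Finset.sum_congr rfl hBi, Finset.sum_const_zero, hBn, zero_add]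
      have hexp2 : n + 1 - 1 + n = n + n := by omega
      rw [hexp2, pow_add, if_neg hIN']
      by_cases hx : x ∈ IN n
      · simp only [if_pos hx]
        ring
      · simp only [if_neg hx]
        ring

lemma KK_two_pow_nonneg (n : ℕ) (x : WalshG) : 0 ≤ KK (2 ^ n) x := by
  rw [KK_two_pow_eq]
  have h1 : ∀ i ∈ Finset.range n,
      (0:ℝ) ≤ (2 : ℝ) ^ (n - 1 + i) * (if x ∈ Bset n i then 1 else 0) := by
    intro i _; positivity
  have h2 : (0:ℝ) ≤ 2 ^ n * (if x ∈ IN n then (1:ℝ) else 0) := by positivity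
  have := Finset.sum_nonneg h1
  linarith

lemma dirichlet_two_pow_nonneg (n : ℕ) (x : WalshG) : 0 ≤ dirichletKernel (2 ^ n) x := by
  rw [dirichlet_two_pow]; positivity

lemma KK_zero (x : WalshG) : KK 0 x = 0 := by simp [KK]

lemma abs_walsh_le (n : ℕ) (x : WalshG) : |walsh n x| ≤ 1 := by
  rw [walsh, Finset.abs_prod]
  apply Finset.prod_le_one (fun i _ => abs_nonneg _)
  intro i _
  by_cases h : n.testBit i <;> simp [h, abs_pow]

lemma abs_dirichlet_le (n : ℕ) (x : WalshG) : |dirichletKernel n x| ≤ n := by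
  rw [dirichletKernel]
  calc |∑ k ∈ Finset.range n, walsh k x| ≤ ∑ k ∈ Finset.range n, |walsh k x| :=
        Finset.abs_sum_le_sum_abs _ _
    _ ≤ ∑ _k ∈ Finset.range n, (1:ℝ) := Finset.sum_le_sum fun i _ => abs_walsh_le i x
    _ = n := by simp

lemma abs_KK_le (n : ℕ) (x : WalshG) : |KK n x| ≤ (n:ℝ) * n := by
  rw [KK]
  calc |∑ k ∈ Finset.Icc 1 n, dirichletKernel k x|
      ≤ ∑ k ∈ Finset.Icc 1 n, |dirichletKernel k x| := Finset.abs_sum_le_sum_abs _ _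
    _ ≤ ∑ _k ∈ Finset.Icc 1 n, (n:ℝ) := by
        apply Finset.sum_le_sum
        intro i hi
        calc |dirichletKernel i x| ≤ (i:ℝ) := abs_dirichlet_le i x
          _ ≤ (n:ℝ) := by exact_mod_cast (Finset.mem_Icc.mp hi).2
    _ ≤ (n:ℝ) * n := by
        rw [Finset.sum_const, nsmul_eq_mul, Nat.card_Icc]
        have h1 : ((n + 1 - 1 : ℕ):ℝ) ≤ (n:ℝ) := by
          simp
        have h2 : (0:ℝ) ≤ (n:ℝ) := Nat.cast_nonneg n
        nlinarith

lemma measurable_walsh (n : ℕ) : Measurable (walsh n) := by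
  apply Finset.measurable_prod
  intro k _
  by_cases h : n.testBit k
  · simp only [h, if_true]
    exact (measurable_of_countable (fun y : ZMod 2 => ((-1:ℝ)) ^ y.val)).comp
      (measurable_pi_apply k)
  · simp only [h, if_false]; exact measurable_const

lemma measurable_dirichlet (n : ℕ) : Measurable (dirichletKernel n) :=
  Finset.measurable_sum _ fun k _ => measurable_walsh k

lemma measurable_KK (n : ℕ) : Measurable (KK n) :=
  Finset.measurable_sum _ fun k _ => measurable_dirichlet k

lemma abs_walsh_two_pow (A : ℕ) (x : WalshG) : |walsh (2 ^ A) x| = 1 := by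
  rw [walsh_two_pow, abs_pow, abs_neg, abs_one, one_pow]

/-! ### Properties of `lpTransDiff` and `modulus` -/

section G
variable {p : ℝ} {f : WalshG → ℝ}

lemma g_nonneg (t : WalshG) : 0 ≤ lpTransDiff p f t := ENNReal.toReal_nonneg

lemma lpNorm_nonneg : 0 ≤ lpNorm p f := ENNReal.toReal_nonneg

lemma modulus_nonneg (s : ℕ) : 0 ≤ modulus p f s := by
  apply Real.iSup_nonneg
  intro t
  apply Real.iSup_nonneg
  intro _
  exact g_nonneg t

variable (hp : 1 ≤ p) (hf : MemLp f (ENNReal.ofReal p) μG)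
include hp hf

omit hp in
lemma aesm_translate (t : WalshG) :
    AEStronglyMeasurable (fun x => f (x + t)) μG :=
  hf.1.comp_quasiMeasurePreserving (measPres t).quasiMeasurePreserving

omit hp in
lemma eLpNorm_translate (t : WalshG) :
    eLpNorm (fun x => f (x + t)) (ENNReal.ofReal p) μG = eLpNorm f (ENNReal.ofReal p) μG :=
  eLpNorm_comp_measurePreserving hf.1 (measPres t)

lemma g_le_two_lpNorm (t : WalshG) : lpTransDiff p f t ≤ 2 * lpNorm p f := by
  have h1 : eLpNorm (fun x => f (x + t) - f x) (ENNReal.ofReal p) μG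
      ≤ eLpNorm f (ENNReal.ofReal p) μG + eLpNorm f (ENNReal.ofReal p) μG := by
    have := eLpNorm_sub_le (aesm_translate hf t) hf.1 (ENNReal.one_le_ofReal.mpr hp)
    rwa [eLpNorm_translate hf t] at this
  have hfin : eLpNorm f (ENNReal.ofReal p) μG ≠ ⊤ := hf.2.ne
  rw [lpTransDiff, _root_.lpNorm, _root_.lpNorm]
  calc (eLpNorm (fun x => f (x + t) - f x) (ENNReal.ofReal p) μG).toReal
      ≤ (eLpNorm f (ENNReal.ofReal p) μG + eLpNorm f (ENNReal.ofReal p) μG).toReal :=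
        ENNReal.toReal_mono (by finiteness) h1
    _ = 2 * lpNorm p f := by rw [ENNReal.toReal_add hfin hfin, _root_.lpNorm]; ring

lemma g_le_modulus {s : ℕ} {t : WalshG} (ht : t ∈ IN s) :
    lpTransDiff p f t ≤ modulus p f s := by
  have hb : BddAbove (Set.range fun u => ⨆ _ : u ∈ IN s, lpTransDiff p f u) := by
    refine ⟨max (2 * lpNorm p f) 0, ?_⟩
    rintro y ⟨u, rfl⟩
    by_cases hu : u ∈ IN s
    · haveI : Nonempty (u ∈ IN s) := ⟨hu⟩
      show (⨆ _ : u ∈ IN s, lpTransDiff p f u) ≤ _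
      rw [ciSup_const]
      exact le_max_of_le_left (g_le_two_lpNorm hp hf u)
    · haveI : IsEmpty (u ∈ IN s) := ⟨hu⟩
      show (⨆ _ : u ∈ IN s, lpTransDiff p f u) ≤ _
      rw [iSup, Set.range_eq_empty, Real.sSup_empty]
      exact le_max_right _ _
  have h1 : (⨆ _ : t ∈ IN s, lpTransDiff p f t) ≤ modulus p f s := le_ciSup hb t
  haveI : Nonempty (t ∈ IN s) := ⟨ht⟩
  rwa [ciSup_const] at h1

lemma g_measurable : Measurable (lpTransDiff p f) := by
  set f₀ := hf.1.mk f with hf₀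
  have hm : StronglyMeasurable f₀ := hf.1.stronglyMeasurable_mk
  have hae : f =ᵐ[μG] f₀ := hf.1.ae_eq_mk
  have hq0 : ENNReal.ofReal p ≠ 0 := by
    rw [Ne, ENNReal.ofReal_eq_zero]; linarith
  have hqt : ENNReal.ofReal p ≠ ⊤ := ENNReal.ofReal_ne_top
  have hqr : (ENNReal.ofReal p).toReal = p := ENNReal.toReal_ofReal (by linarith)
  have key : ∀ t, lpTransDiff p f t
      = ((∫⁻ x, (‖f₀ (x + t) - f₀ x‖₊ : ENNReal) ^ p ∂μG) ^ (1 / p)).toReal := by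
    intro t
    have h1 : (fun x => f (x + t) - f x) =ᵐ[μG] fun x => f₀ (x + t) - f₀ x := by
      have h2 : (fun x => f (x + t)) =ᵐ[μG] (fun x => f₀ (x + t)) :=
        (measPres t).quasiMeasurePreserving.ae_eq_comp hae
      exact h2.sub hae
    rw [lpTransDiff, _root_.lpNorm, eLpNorm_congr_ae h1,
      eLpNorm_eq_lintegral_rpow_enorm_toReal hq0 hqt, hqr]
    simp only [enorm_eq_nnnorm]
  have hmeas : Measurable fun t =>
      ((∫⁻ x, (‖f₀ (x + t) - f₀ x‖₊ : ENNReal) ^ p ∂μG) ^ (1 / p)).toReal := by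
    apply Measurable.ennreal_toReal
    apply Measurable.pow_const
    apply Measurable.lintegral_prod_right (f := fun t x => (‖f₀ (x + t) - f₀ x‖₊ : ENNReal) ^ p)
    have m1 : Measurable fun q : WalshG × WalshG => f₀ (q.2 + q.1) :=
      hm.measurable.comp (measurable_snd.add measurable_fst)
    have m2 : Measurable fun q : WalshG × WalshG => f₀ q.2 :=
      hm.measurable.comp measurable_snd
    exact ((measurable_coe_nnreal_ennreal.comp (m1.sub m2).nnnorm).pow_const _)
  rw [show lpTransDiff p f = _ from funext key]
  exact hmeas

lemma integrable_g_mul {h : WalshG → ℝ} (hh : Measurable h) {C : ℝ}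
    (hC : ∀ x, |h x| ≤ C) :
    Integrable (fun t => lpTransDiff p f t * h t) μG := by
  refine Integrable.mono' (integrable_const (2 * lpNorm p f * C)) ?_ ?_
  · exact ((g_measurable hp hf).mul hh).aestronglyMeasurable
  · filter_upwards with t
    rw [Real.norm_eq_abs, abs_mul, abs_of_nonneg (g_nonneg t)]
    have h0 : (0:ℝ) ≤ 2 * lpNorm p f := by
      have := lpNorm_nonneg (p := p) (f := f); linarith
    exact mul_le_mul (g_le_two_lpNorm hp hf t) (hC t) (abs_nonneg _) h0

lemma integrable_g : Integrable (lpTransDiff p f) μG := by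
  have := integrable_g_mul hp hf (h := fun _ => (1:ℝ)) measurable_const
    (C := 1) (fun x => by norm_num)
  simpa using this

lemma integral_g_indicator {S : Set WalshG} (hS : MeasurableSet S) {s : ℕ}
    (hsub : S ⊆ IN s) :
    ∫ t, lpTransDiff p f t * (if t ∈ S then 1 else 0) ∂μG
      ≤ (μG S).toReal * modulus p f s := by
  have heq : (fun t => lpTransDiff p f t * (if t ∈ S then 1 else 0))
      = S.indicator (lpTransDiff p f) := by
    funext t; by_cases h : t ∈ S <;> simp [Set.indicator, h]
  rw [heq, integral_indicator hS]
  calc ∫ t in S, lpTransDiff p f t ∂μG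
      ≤ ∫ _t in S, modulus p f s ∂μG := by
        apply setIntegral_mono_on ((integrable_g hp hf).integrableOn)
          (integrableOn_const (measure_lt_top _ _).ne) hS
        intro t ht
        exact g_le_modulus hp hf (hsub ht)
    _ = (μG S).toReal * modulus p f s := by rw [setIntegral_const, smul_eq_mul, measureReal_def]

end G

section G2
variable {p : ℝ} {f : WalshG → ℝ} (hp : 1 ≤ p) (hf : MemLp f (ENNReal.ofReal p) μG)

lemma Bset_eq_ZS (n i : ℕ) : Bset n i = ZS ((Finset.range n).erase i) := by
  ext x
  simp only [Bset, ZS, Set.mem_setOf_eq, Finset.mem_erase, Finset.mem_range]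
  constructor
  · rintro h j ⟨hne, hlt⟩; exact h j hlt hne
  · intro h j hlt hne; exact h j ⟨hne, hlt⟩

lemma Bset_subset_IN {n i : ℕ} (hin : i < n) : Bset n i ⊆ IN i :=
  fun x hx j hj => hx j (lt_trans hj hin) (Nat.ne_of_lt hj)

lemma measurableSet_Bset (n i : ℕ) : MeasurableSet (Bset n i) := by
  rw [Bset_eq_ZS]; exact measurableSet_ZS _

lemma toReal_measure_Bset {n i : ℕ} (hin : i < n) :
    (μG (Bset n i)).toReal = (2 : ℝ)⁻¹ ^ (n - 1) := by
  rw [Bset_eq_ZS, measure_ZS, Finset.card_erase_of_mem (Finset.mem_range.2 hin),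
    Finset.card_range]
  simp [ENNReal.toReal_pow]

include hp hf

lemma integrable_g_ind {S : Set WalshG} (hS : MeasurableSet S) :
    Integrable (fun t => lpTransDiff p f t * (if t ∈ S then 1 else 0)) μG := by
  apply integrable_g_mul hp hf (Measurable.ite hS measurable_const measurable_const) (C := 1)
  intro x
  split <;> simp

lemma integral_g_KK_two_pow (n : ℕ) :
    ∫ t, lpTransDiff p f t * KK (2 ^ n) t ∂μG
      ≤ ∑ i ∈ Finset.range (n + 1), (2 : ℝ) ^ i * modulus p f i := by
  have hrw : (fun t => lpTransDiff p f t * KK (2 ^ n) t)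
      = fun t => (∑ i ∈ Finset.range n,
            (2 : ℝ) ^ (n - 1 + i) * (lpTransDiff p f t * (if t ∈ Bset n i then 1 else 0)))
          + 2 ^ n * (lpTransDiff p f t * (if t ∈ IN n then 1 else 0)) := by
    funext t
    rw [KK_two_pow_eq, mul_add, Finset.mul_sum]
    congr 1
    · exact Finset.sum_congr rfl fun i _ => by ring
    · ring
  have hintB : ∀ i, Integrable
      (fun t => (2 : ℝ) ^ (n - 1 + i) * (lpTransDiff p f t * (if t ∈ Bset n i then 1 else 0))) μG :=
    fun i => (integrable_g_ind hp hf (measurableSet_Bset n i)).const_mul _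
  have hintI : Integrable
      (fun t => (2:ℝ) ^ n * (lpTransDiff p f t * (if t ∈ IN n then 1 else 0))) μG :=
    (integrable_g_ind hp hf (measurableSet_IN n)).const_mul _
  rw [hrw, integral_add (integrable_finset_sum _ fun i _ => hintB i) hintI,
    integral_finset_sum _ fun i _ => hintB i]
  have hB : ∀ i ∈ Finset.range n,
      ∫ t, (2 : ℝ) ^ (n - 1 + i) * (lpTransDiff p f t * (if t ∈ Bset n i then 1 else 0)) ∂μG
        ≤ (2 : ℝ) ^ i * modulus p f i := by
    intro i hi
    have hin := Finset.mem_range.mp hi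
    rw [integral_const_mul]
    have h1 := integral_g_indicator hp hf (measurableSet_Bset n i) (Bset_subset_IN hin)
    rw [toReal_measure_Bset hin] at h1
    calc (2:ℝ) ^ (n - 1 + i) * ∫ t, lpTransDiff p f t * (if t ∈ Bset n i then 1 else 0) ∂μG
        ≤ (2:ℝ) ^ (n - 1 + i) * ((2 : ℝ)⁻¹ ^ (n - 1) * modulus p f i) := by
          apply mul_le_mul_of_nonneg_left h1 (by positivity)
      _ = (2 : ℝ) ^ i * modulus p f i := by
          rw [pow_add]
          have : (2:ℝ) ^ (n-1) * (2:ℝ)⁻¹ ^ (n-1) = 1 := by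
            rw [← mul_pow]; norm_num
          calc (2:ℝ) ^ (n-1) * (2:ℝ) ^ i * ((2:ℝ)⁻¹ ^ (n-1) * modulus p f i)
              = ((2:ℝ) ^ (n-1) * (2:ℝ)⁻¹ ^ (n-1)) * ((2:ℝ) ^ i * modulus p f i) := by ring
            _ = (2 : ℝ) ^ i * modulus p f i := by rw [this, one_mul]
  have hI : ∫ t, (2:ℝ) ^ n * (lpTransDiff p f t * (if t ∈ IN n then 1 else 0)) ∂μG
      ≤ modulus p f n := by
    rw [integral_const_mul]
    have h1 := integral_g_indicator hp hf (measurableSet_IN n) (le_refl (IN n))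
    rw [toReal_measure_IN] at h1
    calc (2:ℝ) ^ n * ∫ t, lpTransDiff p f t * (if t ∈ IN n then 1 else 0) ∂μG
        ≤ (2:ℝ) ^ n * ((2 : ℝ)⁻¹ ^ n * modulus p f n) := by
          apply mul_le_mul_of_nonneg_left h1 (by positivity)
      _ = modulus p f n := by
          have : (2:ℝ) ^ n * (2:ℝ)⁻¹ ^ n = 1 := by rw [← mul_pow]; norm_num
          calc (2:ℝ) ^ n * ((2:ℝ)⁻¹ ^ n * modulus p f n)
              = ((2:ℝ) ^ n * (2:ℝ)⁻¹ ^ n) * modulus p f n := by ring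
            _ = modulus p f n := by rw [this, one_mul]
  calc (∑ i ∈ Finset.range n, ∫ t, (2 : ℝ) ^ (n - 1 + i) * (lpTransDiff p f t * (if t ∈ Bset n i then 1 else 0)) ∂μG)
        + ∫ t, (2:ℝ) ^ n * (lpTransDiff p f t * (if t ∈ IN n then 1 else 0)) ∂μG
      ≤ (∑ i ∈ Finset.range n, (2 : ℝ) ^ i * modulus p f i) + modulus p f n :=
        add_le_add (Finset.sum_le_sum hB) hI
    _ ≤ ∑ i ∈ Finset.range (n + 1), (2 : ℝ) ^ i * modulus p f i := by
        rw [Finset.sum_range_succ]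
        have h2n : (1:ℝ) ≤ 2 ^ n := by
          calc (1:ℝ) = 1 ^ n := (one_pow n).symm
            _ ≤ 2 ^ n := pow_le_pow_left₀ (by norm_num) (by norm_num) n
        have h1 : modulus p f n ≤ (2:ℝ) ^ n * modulus p f n := by
          nlinarith [modulus_nonneg (p := p) (f := f) n]
        linarith

omit hp hf in
lemma rhs_term_nonneg (l : ℕ) :
    0 ≤ (∑ s ∈ Finset.range (l + 1), (2:ℝ) ^ s * modulus p f s) + 2 ^ l * modulus p f l := by
  have h1 : 0 ≤ ∑ s ∈ Finset.range (l + 1), (2:ℝ) ^ s * modulus p f s :=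
    Finset.sum_nonneg fun s _ => mul_nonneg (by positivity) (modulus_nonneg s)
  have h2 : 0 ≤ (2:ℝ) ^ l * modulus p f l := mul_nonneg (by positivity) (modulus_nonneg l)
  linarith

omit hp hf in
lemma rhs_nonneg (k : ℕ) :
    0 ≤ ∑ l ∈ Finset.range (k + 1),
        ((∑ s ∈ Finset.range (l + 1), (2:ℝ) ^ s * modulus p f s) + 2 ^ l * modulus p f l) :=
  Finset.sum_nonneg fun l _ => rhs_term_nonneg l

lemma main_bound : ∀ k j, 1 ≤ j → j ≤ 2 ^ (k + 1) - 1 →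
    ∫ t, lpTransDiff p f t * |KK j t| ∂μG
      ≤ ∑ l ∈ Finset.range (k + 1),
          ((∑ s ∈ Finset.range (l + 1), (2:ℝ) ^ s * modulus p f s) + 2 ^ l * modulus p f l) := by
  intro k
  induction k with
  | zero =>
    intro j h1 h2
    have hj : j = 1 := by
      have : (2:ℕ) ^ (0 + 1) - 1 = 1 := by norm_num
      omega
    subst hj
    have heq : (fun t => lpTransDiff p f t * |KK 1 t|)
        = fun t => lpTransDiff p f t * (if t ∈ IN 0 then 1 else 0) := by
      funext t
      have h0 : t ∈ IN 0 := fun k hk => absurd hk (by omega)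
      rw [KK_one, if_pos h0, abs_one]
    rw [heq]
    have hle := integral_g_indicator hp hf (measurableSet_IN 0) (le_refl (IN 0))
    rw [toReal_measure_IN] at hle
    simp only [pow_zero, one_mul] at hle
    have hm0 := modulus_nonneg (p := p) (f := f) 0
    have hrhs : ∑ l ∈ Finset.range (0 + 1),
        ((∑ s ∈ Finset.range (l + 1), (2:ℝ) ^ s * modulus p f s) + 2 ^ l * modulus p f l)
        = modulus p f 0 + modulus p f 0 := by
      simp [Finset.sum_range_one]
    rw [hrhs]
    linarith
  | succ k ih =>
    intro j h1 h2
    by_cases hj : j ≤ 2 ^ (k + 1) - 1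
    · refine le_trans (ih j h1 hj) ?_
      nth_rewrite 2 [Finset.sum_range_succ]
      have := rhs_term_nonneg (p := p) (f := f) (k + 1)
      linarith
    · push_neg at hj
      have hP : 0 < 2 ^ (k + 1) := Nat.pow_pos (by norm_num)
      have h2P : (2:ℕ) ^ (k + 2) = 2 * 2 ^ (k + 1) := by ring
      set m := j - 2 ^ (k + 1) with hm
      have hjm : j = 2 ^ (k + 1) + m := by omega
      have hmle : m ≤ 2 ^ (k + 1) := by omega
      have hmle' : m ≤ 2 ^ (k + 1) - 1 := by omega
      -- pointwise bound
      have hpt : ∀ t, |KK j t| ≤ KK (2 ^ (k + 1)) t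
          + (m:ℝ) * dirichletKernel (2 ^ (k + 1)) t + |KK m t| := by
        intro t
        rw [hjm, KK_add hmle]
        have hA := KK_two_pow_nonneg (k + 1) t
        have hD := dirichlet_two_pow_nonneg (k + 1) t
        have hw := abs_walsh_two_pow (k + 1) t
        have hm0 : (0:ℝ) ≤ (m:ℝ) := Nat.cast_nonneg m
        calc |KK (2 ^ (k+1)) t + (m:ℝ) * dirichletKernel (2 ^ (k+1)) t
              + walsh (2 ^ (k+1)) t * KK m t|
            ≤ |KK (2 ^ (k+1)) t + (m:ℝ) * dirichletKernel (2 ^ (k+1)) t|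
              + |walsh (2 ^ (k+1)) t * KK m t| := abs_add_le _ _
          _ = |KK (2 ^ (k+1)) t + (m:ℝ) * dirichletKernel (2 ^ (k+1)) t|
              + |walsh (2 ^ (k+1)) t| * |KK m t| := by rw [abs_mul]
          _ ≤ KK (2 ^ (k + 1)) t + (m:ℝ) * dirichletKernel (2 ^ (k + 1)) t + |KK m t| := by
              rw [hw, one_mul, abs_of_nonneg (by nlinarith)]
      -- integrabilities
      have hint1 : Integrable (fun t => lpTransDiff p f t * |KK j t|) μG := by
        apply integrable_g_mul hp hf (measurable_KK j).abs (C := (j:ℝ) * j)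
        intro x; rw [abs_abs]; exact abs_KK_le j x
      have hint2 : Integrable (fun t => lpTransDiff p f t * KK (2 ^ (k + 1)) t) μG := by
        apply integrable_g_mul hp hf (measurable_KK _)
          (C := ((2 ^ (k + 1) : ℕ):ℝ) * ((2 ^ (k + 1) : ℕ):ℝ))
        intro x; exact abs_KK_le _ x
      have hint3 : Integrable
          (fun t => lpTransDiff p f t * ((m:ℝ) * dirichletKernel (2 ^ (k + 1)) t)) μG := by
        apply integrable_g_mul hp hf (measurable_const.mul (measurable_dirichlet _))
          (C := (m:ℝ) * ((2 ^ (k + 1) : ℕ):ℝ))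
        intro x
        simp only [Pi.mul_apply]
        rw [abs_mul, Nat.abs_cast]
        exact mul_le_mul_of_nonneg_left (abs_dirichlet_le _ x) (Nat.cast_nonneg m)
      have hint4 : Integrable (fun t => lpTransDiff p f t * |KK m t|) μG := by
        apply integrable_g_mul hp hf (measurable_KK m).abs (C := (m:ℝ) * m)
        intro x; rw [abs_abs]; exact abs_KK_le m x
      -- integral splitting
      have hstep : ∫ t, lpTransDiff p f t * |KK j t| ∂μG
          ≤ (∫ t, lpTransDiff p f t * KK (2 ^ (k + 1)) t ∂μG)
            + (∫ t, lpTransDiff p f t * ((m:ℝ) * dirichletKernel (2 ^ (k + 1)) t) ∂μG)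
            + ∫ t, lpTransDiff p f t * |KK m t| ∂μG := by
        have hint23 : Integrable (fun t => lpTransDiff p f t * KK (2 ^ (k + 1)) t
            + lpTransDiff p f t * ((m:ℝ) * dirichletKernel (2 ^ (k + 1)) t)) μG :=
          hint2.add hint3
        have hint234 : Integrable (fun t => (lpTransDiff p f t * KK (2 ^ (k + 1)) t
            + lpTransDiff p f t * ((m:ℝ) * dirichletKernel (2 ^ (k + 1)) t))
            + lpTransDiff p f t * |KK m t|) μG := hint23.add hint4
        rw [← integral_add hint2 hint3, ← integral_add hint23 hint4]
        apply integral_mono hint1 hint234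
        intro t
        have hg := g_nonneg (p := p) (f := f) t
        have h := hpt t
        simp only [Pi.add_apply]
        nlinarith
      -- bound the Dirichlet part
      have hDir : ∫ t, lpTransDiff p f t * ((m:ℝ) * dirichletKernel (2 ^ (k + 1)) t) ∂μG
          ≤ 2 ^ (k + 1) * modulus p f (k + 1) := by
        have heq2 : (fun t => lpTransDiff p f t * ((m:ℝ) * dirichletKernel (2 ^ (k + 1)) t))
            = fun t => ((m:ℝ) * 2 ^ (k + 1))
                * (lpTransDiff p f t * (if t ∈ IN (k + 1) then 1 else 0)) := by
          funext t
          rw [dirichlet_two_pow]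
          by_cases h : t ∈ IN (k + 1)
          · simp only [if_pos h]; push_cast; ring
          · simp only [if_neg h]; ring
        rw [heq2, integral_const_mul]
        have h1 := integral_g_indicator hp hf (measurableSet_IN (k + 1)) (le_refl (IN (k + 1)))
        rw [toReal_measure_IN] at h1
        have hmul : (0:ℝ) ≤ (m:ℝ) * 2 ^ (k + 1) := by positivity
        calc (m:ℝ) * 2 ^ (k + 1) * ∫ t, lpTransDiff p f t * (if t ∈ IN (k + 1) then 1 else 0) ∂μG
            ≤ (m:ℝ) * 2 ^ (k + 1) * ((2 : ℝ)⁻¹ ^ (k + 1) * modulus p f (k + 1)) :=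
              mul_le_mul_of_nonneg_left h1 hmul
          _ = (m:ℝ) * modulus p f (k + 1) := by
              have : (2:ℝ) ^ (k+1) * (2:ℝ)⁻¹ ^ (k+1) = 1 := by rw [← mul_pow]; norm_num
              calc (m:ℝ) * 2 ^ (k + 1) * ((2 : ℝ)⁻¹ ^ (k + 1) * modulus p f (k + 1))
                  = ((2:ℝ) ^ (k+1) * (2:ℝ)⁻¹ ^ (k+1)) * ((m:ℝ) * modulus p f (k + 1)) := by ring
                _ = (m:ℝ) * modulus p f (k + 1) := by rw [this, one_mul]
          _ ≤ 2 ^ (k + 1) * modulus p f (k + 1) := by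
              apply mul_le_mul_of_nonneg_right _ (modulus_nonneg (k + 1))
              calc (m:ℝ) ≤ ((2 ^ (k + 1) : ℕ):ℝ) := by exact_mod_cast hmle
                _ = 2 ^ (k + 1) := by push_cast; ring
      -- bound the remainder KK m part
      have hRem : ∫ t, lpTransDiff p f t * |KK m t| ∂μG
          ≤ ∑ l ∈ Finset.range (k + 1),
              ((∑ s ∈ Finset.range (l + 1), (2:ℝ) ^ s * modulus p f s)
                + 2 ^ l * modulus p f l) := by
        rcases Nat.eq_zero_or_pos m with hm0 | hm1
        · have : (fun t => lpTransDiff p f t * |KK m t|) = fun _ => (0:ℝ) := by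
            funext t; rw [hm0, KK_zero, abs_zero, mul_zero]
          rw [this, integral_zero]
          exact rhs_nonneg k
        · exact ih m hm1 hmle'
      -- combine
      rw [Finset.sum_range_succ]
      have hKK2 := integral_g_KK_two_pow hp hf (k + 1)
      linarith

end G2

end FejerAux

/-- the Fejér-kernel modulus estimate for general indices. -/
theorem fejer_kernel_modulus_estimate_general
    (p : ℝ) (hp : 1 ≤ p)
    (f : WalshG → ℝ) (hf : MemLp f (ENNReal.ofReal p) μG)
    (j k : ℕ) (h1 : 2 ^ k ≤ j) (h2 : j ≤ 2 ^ (k + 1) - 1) :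
    (j : ℝ) * ∫ t, lpTransDiff p f t * |fejerKernel j t| ∂μG ≤
      3 * ∑ l ∈ Finset.range (k + 1), ∑ s ∈ Finset.range (l + 1),
            (2 : ℝ) ^ s * modulus p f s := by
  classical
  have h2k : 0 < 2 ^ k := Nat.pow_pos (by norm_num)
  have hj1 : 1 ≤ j := le_trans h2k h1
  have hjR : (0:ℝ) < (j:ℝ) := by exact_mod_cast hj1
  have heq : (fun t => lpTransDiff p f t * |fejerKernel j t|)
      = fun t => (1 / (j:ℝ)) * (lpTransDiff p f t * |FejerAux.KK j t|) := by
    funext t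
    have hker : fejerKernel j t = (1 / (j:ℝ)) * FejerAux.KK j t := rfl
    rw [hker, abs_mul, abs_of_nonneg (by positivity : (0:ℝ) ≤ 1 / (j:ℝ))]
    ring
  rw [heq, integral_const_mul, ← mul_assoc, mul_one_div, div_self (ne_of_gt hjR), one_mul]
  have hmain := FejerAux.main_bound hp hf k j hj1 h2
  have hfinal : (∑ l ∈ Finset.range (k + 1),
        ((∑ s ∈ Finset.range (l + 1), (2:ℝ) ^ s * modulus p f s)
          + 2 ^ l * modulus p f l))
      ≤ 3 * ∑ l ∈ Finset.range (k + 1), ∑ s ∈ Finset.range (l + 1),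
            (2 : ℝ) ^ s * modulus p f s := by
    have hstep : ∀ l ∈ Finset.range (k + 1),
        ((∑ s ∈ Finset.range (l + 1), (2:ℝ) ^ s * modulus p f s)
          + 2 ^ l * modulus p f l)
        ≤ 2 * ∑ s ∈ Finset.range (l + 1), (2:ℝ) ^ s * modulus p f s := by
      intro l _
      have h1' : (2:ℝ) ^ l * modulus p f l
          ≤ ∑ s ∈ Finset.range (l + 1), (2:ℝ) ^ s * modulus p f s :=
        Finset.single_le_sum
          (fun s _ => mul_nonneg (by positivity) (FejerAux.modulus_nonneg s))
          (Finset.self_mem_range_succ l)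
      linarith
    have hS : 0 ≤ ∑ l ∈ Finset.range (k + 1), ∑ s ∈ Finset.range (l + 1),
        (2 : ℝ) ^ s * modulus p f s :=
      Finset.sum_nonneg fun l _ => Finset.sum_nonneg fun s _ =>
        mul_nonneg (by positivity) (FejerAux.modulus_nonneg s)
    calc ∑ l ∈ Finset.range (k + 1),
          ((∑ s ∈ Finset.range (l + 1), (2:ℝ) ^ s * modulus p f s)
            + 2 ^ l * modulus p f l)
        ≤ ∑ l ∈ Finset.range (k + 1),
            2 * ∑ s ∈ Finset.range (l + 1), (2:ℝ) ^ s * modulus p f s :=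
          Finset.sum_le_sum hstep
      _ = 2 * ∑ l ∈ Finset.range (k + 1), ∑ s ∈ Finset.range (l + 1),
            (2 : ℝ) ^ s * modulus p f s := by rw [Finset.mul_sum]
      _ ≤ 3 * ∑ l ∈ Finset.range (k + 1), ∑ s ∈ Finset.range (l + 1),
            (2 : ℝ) ^ s * modulus p f s := by linarith
  linarith
end
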